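/- For every n ≥ 0, let S_n be the grid graph on vertex set [-n, n]² ⊆ ℤ². If v = (v_n)_{n≥0} is an activator sequence that is not identically • (i.e., v_k ≠ • for some k), then the lower burning density satisfies δ̲(S, v) ≥ 1/2. -/

import Mathlib

open Filter Topology

namespace Burning

/-- Points of the `d`-dimensional integer lattice. -/
abbrev Pt (d : ℕ) := Fin d → ℤ

/-- The `L1`-distance between two lattice points. -/
def dist1 {d : ℕ} (x y : Pt d) : ℤ := ∑ i, |x i - y i|

/-- The `L1`-norm of a lattice point. -/
def norm1 {d : ℕ} (x : Pt d) : ℤ := ∑ i, |x i|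

/-- The closed neighbourhood of the set `B` in the grid graph on the vertex set `Vn`
(two vertices adjacent iff at `L1`-distance `1`). -/
def nbhd {d : ℕ} (Vn : Set (Pt d)) (B : Set (Pt d)) : Set (Pt d) :=
  B ∪ {x | x ∈ Vn ∧ ∃ b ∈ B, dist1 x b = 1}

/-- The burned sets of the activator sequence `v` in the sequence of grid graphs on the
vertex sets `V n`; `v n = none` means no vertex is activated at time `n` (the symbol `•`). -/
def burnSet {d : ℕ} (V : ℕ → Set (Pt d)) (v : ℕ → Option (Pt d)) : ℕ → Set (Pt d)
  | 0 => (v 0).elim ∅ (fun x => {x})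
  | n + 1 => nbhd (V (n + 1)) (burnSet V v n) ∪ (v (n + 1)).elim ∅ (fun x => {x})

/-- `v` is an activator sequence for the vertex sets `V`: every activated vertex is a
vertex of the current graph. -/
def IsActivator {d : ℕ} (V : ℕ → Set (Pt d)) (v : ℕ → Option (Pt d)) : Prop :=
  ∀ n x, v n = some x → x ∈ V n

/-- `v` is a valid activator sequence: each newly activated vertex lies in the current
vertex set and is not already burned at the current step. -/
def IsValid {d : ℕ} (V : ℕ → Set (Pt d)) (v : ℕ → Option (Pt d)) : Prop :=
  ∀ n x, v (n + 1) = some x →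
    x ∈ V (n + 1) ∧ x ∉ nbhd (V (n + 1)) (burnSet V v n)

/-- The proportion of burned vertices at time `n`. -/
noncomputable def densitySeq {d : ℕ} (V : ℕ → Set (Pt d)) (v : ℕ → Option (Pt d))
    (n : ℕ) : ℝ :=
  ((burnSet V v n).ncard : ℝ) / ((V n).ncard : ℝ)

/-- The closed `L1`-ball of radius `r` centred at `P`. -/
def ball1 {d : ℕ} (P : Pt d) (r : ℤ) : Set (Pt d) := {x | norm1 (x - P) ≤ r}

/-- The `L1`-sphere of radius `r` centred at `P`. -/
def sphere1 {d : ℕ} (P : Pt d) (r : ℤ) : Set (Pt d) := {x | norm1 (x - P) = r}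

/-- The square grid `[-a, a]² ⊆ ℤ²`. -/
def sqGrid (a : ℤ) : Set (Pt 2) := {x | ∀ i, |x i| ≤ a}

/-- The cube grid `[-a, a]^d ⊆ ℤ^d`. -/
def cubeGrid (d : ℕ) (a : ℤ) : Set (Pt d) := {x | ∀ i, |x i| ≤ a}

/-- The quadrant grid `[0, a]² ⊆ ℤ²`. -/
def quadGrid (a : ℤ) : Set (Pt 2) := {x | ∀ i, 0 ≤ x i ∧ x i ≤ a}

end Burning

namespace Burning

lemma norm1_two (x : Pt 2) : norm1 x = |x 0| + |x 1| := by simp [norm1, Fin.sum_univ_two]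
lemma dist1_two (x y : Pt 2) : dist1 x y = |x 0 - y 0| + |x 1 - y 1| := by
  simp [dist1, Fin.sum_univ_two]
lemma pt2_eq {x y : Pt 2} (h0 : x 0 = y 0) (h1 : x 1 = y 1) : x = y := by
  funext i; fin_cases i
  · exact h0
  · exact h1

lemma burnSet_mono_succ {d : ℕ} (V : ℕ → Set (Pt d)) (v : ℕ → Option (Pt d)) (n : ℕ) :
    burnSet V v n ⊆ burnSet V v (n + 1) := fun x hx => Or.inl (Or.inl hx)

lemma burnSet_mono {d : ℕ} (V : ℕ → Set (Pt d)) (v : ℕ → Option (Pt d)) {m n : ℕ}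
    (h : m ≤ n) : burnSet V v m ⊆ burnSet V v n := by
  induction n with
  | zero => simpa [Nat.le_zero.mp h]
  | succ n ih =>
    rcases Nat.lt_or_ge m (n+1) with h' | h'
    · exact (ih (Nat.lt_succ_iff.mp h')).trans (burnSet_mono_succ V v n)
    · have : m = n + 1 := le_antisymm h h'
      simp [this]

lemma mem_burnSet_self {d : ℕ} (V : ℕ → Set (Pt d)) (v : ℕ → Option (Pt d)) {k : ℕ}
    {P : Pt d} (h : v k = some P) : P ∈ burnSet V v k := by
  cases k with
  | zero => simp [burnSet, h]
  | succ k => right; simp [h]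

lemma burn_step {d : ℕ} (V : ℕ → Set (Pt d)) (v : ℕ → Option (Pt d)) {m : ℕ}
    {x b : Pt d} (hb : b ∈ burnSet V v m) (hxV : x ∈ V (m + 1))
    (hd : dist1 x b = 1) : x ∈ burnSet V v (m + 1) :=
  Set.mem_union_left _ (Set.mem_union_right _ ⟨hxV, b, hb, hd⟩)

lemma int_abs_step {u : ℤ} (hu : u ≠ 0) : ∃ s : ℤ, |s| = 1 ∧ |u - s| = |u| - 1 := by
  rcases lt_or_gt_of_ne hu with h | h
  · exact ⟨-1, by norm_num, by
      rw [abs_of_neg h, abs_of_nonpos (by omega : u - -1 ≤ 0)]; try ring⟩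
  · exact ⟨1, by norm_num, by
      rw [abs_of_pos h, abs_of_nonneg (by omega : (0:ℤ) ≤ u - 1)]; try ring⟩

lemma ball_subset_burnSet (V : ℕ → Set (Pt 2)) (hV : ∀ n : ℕ, V n = sqGrid n)
    (v : ℕ → Option (Pt 2)) {k : ℕ} {P : Pt 2} (hvk : v k = some P)
    (hP : ∀ i, |P i| ≤ (k : ℤ)) :
    ∀ j : ℕ, ball1 P j ⊆ burnSet V v (k + j) := by
  intro j
  induction j with
  | zero =>
    intro x hx
    have hx' : norm1 (x - P) ≤ 0 := by simpa [ball1] using hx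
    rw [norm1_two] at hx'
    simp only [Pi.sub_apply] at hx'
    have ha0 := abs_nonneg (x 0 - P 0)
    have ha1 := abs_nonneg (x 1 - P 1)
    have h0 : x 0 = P 0 := by
      have : |x 0 - P 0| = 0 := by omega
      have := abs_eq_zero.mp this; omega
    have h1 : x 1 = P 1 := by
      have : |x 1 - P 1| = 0 := by omega
      have := abs_eq_zero.mp this; omega
    rw [pt2_eq h0 h1]
    simpa using mem_burnSet_self V v hvk
  | succ j ih =>
    intro x hx
    have hx' : norm1 (x - P) ≤ (j : ℤ) + 1 := by
      have := hx; simp only [ball1, Set.mem_setOf_eq] at this; push_cast at this ⊢; linarith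
    by_cases hle : norm1 (x - P) ≤ (j : ℤ)
    · have : x ∈ burnSet V v (k + j) := ih (by simpa [ball1] using hle)
      exact Set.mem_union_left _ (Set.mem_union_left _ this)
    have heq : |x 0 - P 0| + |x 1 - P 1| = (j : ℤ) + 1 := by
      rw [norm1_two] at hx' hle
      simp only [Pi.sub_apply] at hx' hle
      omega
    have ha0 := abs_nonneg (x 0 - P 0)
    have ha1 := abs_nonneg (x 1 - P 1)
    have hb0' := abs_sub_abs_le_abs_sub (x 0) (P 0)
    have hb1' := abs_sub_abs_le_abs_sub (x 1) (P 1)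
    have hp0 := hP 0
    have hp1 := hP 1
    have h20 : |x 0| ≤ (k : ℤ) + (j + 1) := by omega
    have h21 : |x 1| ≤ (k : ℤ) + (j + 1) := by omega
    have hxV : x ∈ V (k + (j + 1)) := by
      rw [hV]
      intro i
      fin_cases i
      · push_cast; exact h20
      · push_cast; exact h21
    have hne : x 0 ≠ P 0 ∨ x 1 ≠ P 1 := by
      by_contra hc
      push_neg at hc
      rw [hc.1, hc.2] at heq
      simp at heq
      omega
    have hstep : k + (j + 1) = (k + j) + 1 := rfl
    rw [hstep] at hxV ⊢
    rcases hne with h | h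
    · obtain ⟨s, hs1, hs2⟩ := int_abs_step (sub_ne_zero.mpr h)
      have hs2' : |x 0 - s - P 0| = |x 0 - P 0| - 1 := by
        rw [show x 0 - s - P 0 = (x 0 - P 0) - s by ring]; exact hs2
      refine burn_step V v (b := ![x 0 - s, x 1]) (ih ?_) hxV ?_
      · show ![x 0 - s, x 1] ∈ ball1 P (j : ℤ)
        simp only [ball1, Set.mem_setOf_eq, norm1_two, Pi.sub_apply,
          Matrix.cons_val_zero, Matrix.cons_val_one, Matrix.head_cons]
        omega
      · rw [dist1_two]
        simp only [Matrix.cons_val_zero, Matrix.cons_val_one, Matrix.head_cons]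
        rw [show x 0 - (x 0 - s) = s by ring]
        simp [hs1]
    · obtain ⟨s, hs1, hs2⟩ := int_abs_step (sub_ne_zero.mpr h)
      have hs2' : |x 1 - s - P 1| = |x 1 - P 1| - 1 := by
        rw [show x 1 - s - P 1 = (x 1 - P 1) - s by ring]; exact hs2
      refine burn_step V v (b := ![x 0, x 1 - s]) (ih ?_) hxV ?_
      · show ![x 0, x 1 - s] ∈ ball1 P (j : ℤ)
        simp only [ball1, Set.mem_setOf_eq, norm1_two, Pi.sub_apply,
          Matrix.cons_val_zero, Matrix.cons_val_one, Matrix.head_cons]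
        omega
      · rw [dist1_two]
        simp only [Matrix.cons_val_zero, Matrix.cons_val_one, Matrix.head_cons]
        rw [show x 1 - (x 1 - s) = s by ring]
        simp [hs1]
def emb2 : ℤ × ℤ → Pt 2 := fun p => ![p.1, p.2]

lemma emb2_inj : Function.Injective emb2 := by
  intro p q h
  have h0 := congrFun h 0
  have h1 := congrFun h 1
  simp [emb2] at h0 h1
  exact Prod.ext h0 h1

lemma emb2_surj (x : Pt 2) : x = emb2 (x 0, x 1) := by
  apply pt2_eq <;> simp [emb2]

lemma sqGrid_eq (a : ℤ) :
    sqGrid a = emb2 '' ↑(Finset.Icc (-a) a ×ˢ Finset.Icc (-a) a) := by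
  ext x
  constructor
  · intro hx
    refine ⟨(x 0, x 1), ?_, (emb2_surj x).symm⟩
    have h0 := hx 0
    have h1 := hx 1
    simp only [Finset.coe_product, Set.mem_prod, Finset.mem_coe, Finset.mem_Icc]
    constructor
    · constructor <;> [exact neg_le_of_abs_le h0; exact le_of_abs_le h0]
    · constructor <;> [exact neg_le_of_abs_le h1; exact le_of_abs_le h1]
  · rintro ⟨⟨p, q⟩, hpq, rfl⟩
    simp only [Finset.coe_product, Set.mem_prod, Finset.mem_coe, Finset.mem_Icc] at hpq
    intro i
    fin_cases i <;> simp [emb2, abs_le] <;> [exact hpq.1; exact hpq.2]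

lemma sqGrid_finite (a : ℤ) : (sqGrid a).Finite := by
  rw [sqGrid_eq]
  exact (Finset.finite_toSet _).image _

lemma sqGrid_ncard (a : ℕ) : (sqGrid (a : ℤ)).ncard = (2 * a + 1) ^ 2 := by
  rw [sqGrid_eq, Set.ncard_image_of_injective _ emb2_inj, Set.ncard_coe_finset,
    Finset.card_product, Int.card_Icc]
  have : ((a : ℤ) + 1 - -(a : ℤ)).toNat = 2 * a + 1 := by omega
  rw [this]
  ring

lemma burnSet_subset_V (V : ℕ → Set (Pt 2)) (hV : ∀ n : ℕ, V n = sqGrid n)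
    (v : ℕ → Option (Pt 2)) (hact : IsActivator V v) :
    ∀ n, burnSet V v n ⊆ V n := by
  intro n
  induction n with
  | zero =>
    cases hv : v 0 with
    | none => simp [burnSet, hv]
    | some P =>
      intro x hx
      simp [burnSet, hv] at hx
      rw [hx]
      exact hact 0 P hv
  | succ n ih =>
    intro x hx
    rcases hx with (hx | hx) | hx
    · have hxV := ih hx
      rw [hV] at hxV ⊢
      intro i
      have := hxV i
      push_cast
      push_cast at this
      omega
    · exact hx.1
    · cases hv : v (n + 1) with
      | none => simp [hv] at hx
      | some P =>
        simp [hv] at hx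
        rw [hx]
        exact hact (n + 1) P hv

-- the injection giving the lower bound 2(2m+1)^2 on the ball
def ballMap (P : Pt 2) : (ℤ × ℤ) × ℤ → Pt 2 :=
  fun p => ![P 0 + p.1.1 + p.1.2 + p.2, P 1 + p.1.1 - p.1.2]

lemma ball1_card_lb (P : Pt 2) (m : ℕ) :
    2 * (2 * m + 1) ^ 2 ≤ (ball1 P (2 * (m : ℤ) + 1)).ncard := by
  classical
  set F : Finset ((ℤ × ℤ) × ℤ) :=
    (Finset.Icc (-(m : ℤ)) m ×ˢ Finset.Icc (-(m : ℤ)) m) ×ˢ ({0, 1} : Finset ℤ) with hF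
  have hinj : Set.InjOn (ballMap P) ↑F := by
    rintro ⟨⟨a, b⟩, c⟩ hp ⟨⟨a', b'⟩, c'⟩ hq h
    simp only [hF, Finset.coe_product, Set.mem_prod, Finset.mem_coe, Finset.mem_Icc,
      Finset.coe_insert, Set.mem_insert_iff, Finset.coe_singleton,
      Set.mem_singleton_iff] at hp hq
    have h0 := congrFun h 0
    have h1 := congrFun h 1
    simp only [ballMap, Matrix.cons_val_zero, Matrix.cons_val_one, Matrix.head_cons] at h0 h1
    obtain ⟨-, hc⟩ := hp
    obtain ⟨-, hc'⟩ := hq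
    have : a = a' ∧ b = b' ∧ c = c' := by
      rcases hc with rfl | rfl <;> rcases hc' with rfl | rfl <;> omega
    simp [this.1, this.2.1, this.2.2]
  have hsub : ballMap P '' ↑F ⊆ ball1 P (2 * (m : ℤ) + 1) := by
    rintro x ⟨⟨⟨a, b⟩, c⟩, hp, rfl⟩
    simp only [hF, Finset.coe_product, Set.mem_prod, Finset.mem_coe, Finset.mem_Icc,
      Finset.coe_insert, Set.mem_insert_iff, Finset.coe_singleton,
      Set.mem_singleton_iff] at hp
    obtain ⟨⟨⟨ha1, ha2⟩, hb1, hb2⟩, hc⟩ := hp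
    simp only [ball1, Set.mem_setOf_eq, norm1_two, Pi.sub_apply, ballMap,
      Matrix.cons_val_zero, Matrix.cons_val_one, Matrix.head_cons]
    have hc' : c = 0 ∨ c = 1 := hc
    have e0 : P 0 + a + b + c - P 0 = a + b + c := by ring
    have e1 : P 1 + a - b - P 1 = a - b := by ring
    rw [e0, e1]
    rcases abs_cases (a + b + c) with ⟨h1, h2⟩ | ⟨h1, h2⟩ <;>
      rcases abs_cases (a - b) with ⟨h3, h4⟩ | ⟨h3, h4⟩ <;> omega
  have hcard : F.card = 2 * (2 * m + 1) ^ 2 := by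
    simp only [hF, Finset.card_product, Int.card_Icc]
    have h1 : ((m : ℤ) + 1 - -(m : ℤ)).toNat = 2 * m + 1 := by omega
    have h2 : ({0, 1} : Finset ℤ).card = 2 := by decide
    rw [h1, h2]
    ring
  calc 2 * (2 * m + 1) ^ 2 = F.card := hcard.symm
    _ = (ballMap P '' ↑F).ncard := by
        rw [Set.ncard_image_of_injOn hinj, Set.ncard_coe_finset]
    _ ≤ (ball1 P (2 * (m : ℤ) + 1)).ncard := by
        refine Set.ncard_le_ncard hsub ?_
        -- ball1 is finite: it's a subset of a sqGrid
        apply (sqGrid_finite (|P 0| + |P 1| + (2 * m + 1))).subset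
        intro x hx
        simp only [ball1, Set.mem_setOf_eq, norm1_two, Pi.sub_apply] at hx
        intro i
        have hb0' := abs_sub_abs_le_abs_sub (x 0) (P 0)
        have hb1' := abs_sub_abs_le_abs_sub (x 1) (P 1)
        have ha0 := abs_nonneg (x 0 - P 0)
        have ha1 := abs_nonneg (x 1 - P 1)
        have hp0 := abs_nonneg (P 0)
        have hp1 := abs_nonneg (P 1)
        fin_cases i
        · show |x 0| ≤ |P 0| + |P 1| + (2 * (m : ℤ) + 1)
          omega
        · show |x 1| ≤ |P 0| + |P 1| + (2 * (m : ℤ) + 1)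
          omega
end Burning

open Burning in
/-- for the grids `S_n = [-n, n]²`, any activator sequence that is
not identically `•` has lower burning density at least `1/2`. -/
theorem stmt3 (V : ℕ → Set (Pt 2)) (hV : ∀ n : ℕ, V n = sqGrid n)
    (v : ℕ → Option (Pt 2)) (hact : IsActivator V v)
    (hne : ∃ k, v k ≠ none) :
    (1 : ℝ) / 2 ≤ Filter.liminf (densitySeq V v) Filter.atTop := by
  classical
  obtain ⟨k, hk⟩ := hne
  obtain ⟨P, hvk⟩ := Option.ne_none_iff_exists'.mp hk
  have hPgrid : ∀ i, |P i| ≤ (k : ℤ) := by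
    have h := hact k P hvk
    rw [hV] at h
    exact h
  set L : ℕ → ℝ := fun n => 2 * (((n : ℝ) - k - 1) / (2 * n + 1)) ^ 2 with hL
  -- pointwise bound
  have key : ∀ n, k + 1 ≤ n → L n ≤ densitySeq V v n := by
    intro n hn
    have hVfin : (V n).Finite := by rw [hV]; exact sqGrid_finite _
    have hBfin : (burnSet V v n).Finite := hVfin.subset (burnSet_subset_V V hV v hact n)
    set m : ℕ := (n - k - 1) / 2 with hm
    have hmn : k + (2 * m + 1) ≤ n := by omega
    have hsub : ball1 P (2 * (m : ℤ) + 1) ⊆ burnSet V v n := by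
      have h1 := ball_subset_burnSet V hV v hvk hPgrid (2 * m + 1)
      have h2 : ball1 P ((2 * m + 1 : ℕ) : ℤ) = ball1 P (2 * (m : ℤ) + 1) := by
        push_cast; rfl
      rw [h2] at h1
      exact h1.trans (burnSet_mono V v hmn)
    have hcard : 2 * (2 * m + 1) ^ 2 ≤ (burnSet V v n).ncard :=
      le_trans (ball1_card_lb P m) (Set.ncard_le_ncard hsub hBfin)
    have hnat : 2 * (n - k - 1) ^ 2 ≤ (burnSet V v n).ncard := by
      have hle : (n - k - 1) ≤ 2 * m + 1 := by omega
      calc 2 * (n - k - 1) ^ 2 ≤ 2 * (2 * m + 1) ^ 2 := by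
            have := Nat.pow_le_pow_left hle 2; omega
        _ ≤ _ := hcard
    have hVcard : (V n).ncard = (2 * n + 1) ^ 2 := by rw [hV]; exact sqGrid_ncard n
    have hcast : ((n - k - 1 : ℕ) : ℝ) = (n : ℝ) - k - 1 := by
      have h1 : ((n - k - 1 : ℕ) : ℝ) = ((n - (k + 1) : ℕ) : ℝ) := by norm_num [Nat.sub_sub]
      rw [h1, Nat.cast_sub hn]
      push_cast; ring
    have hnum : 2 * ((n : ℝ) - k - 1) ^ 2 ≤ ((burnSet V v n).ncard : ℝ) := by
      calc 2 * ((n : ℝ) - k - 1) ^ 2 = ((2 * (n - k - 1) ^ 2 : ℕ) : ℝ) := by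
            rw [← hcast]; push_cast; ring
        _ ≤ _ := Nat.cast_le.mpr hnat
    have hDpos : (0 : ℝ) < (2 * (n : ℝ) + 1) ^ 2 := by positivity
    have goal' : 2 * ((n : ℝ) - k - 1) ^ 2 / (2 * (n : ℝ) + 1) ^ 2 ≤
        ((burnSet V v n).ncard : ℝ) / (2 * (n : ℝ) + 1) ^ 2 := by
      gcongr
    calc L n = 2 * ((n : ℝ) - k - 1) ^ 2 / (2 * (n : ℝ) + 1) ^ 2 := by
          simp only [hL]; rw [div_pow]; ring
      _ ≤ ((burnSet V v n).ncard : ℝ) / (2 * (n : ℝ) + 1) ^ 2 := goal'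
      _ = densitySeq V v n := by
          rw [densitySeq, hVcard]; push_cast; ring_nf
  have hbound : ∀ᶠ n in atTop, L n ≤ densitySeq V v n :=
    eventually_atTop.mpr ⟨k + 1, key⟩
  -- tendsto of L
  have h0 : Tendsto (fun n : ℕ => 1 / (n : ℝ)) atTop (𝓝 0) :=
    tendsto_one_div_atTop_nhds_zero_nat
  have hnum : Tendsto (fun n : ℕ => 1 - ((k : ℝ) + 1) * (1 / n)) atTop (𝓝 1) := by
    have := (h0.const_mul ((k : ℝ) + 1)).const_sub 1
    simpa using this
  have hden : Tendsto (fun n : ℕ => 2 + 1 / (n : ℝ)) atTop (𝓝 2) := by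
    have := h0.const_add 2
    simpa using this
  have hg : Tendsto (fun n : ℕ => (1 - ((k : ℝ) + 1) * (1 / n)) / (2 + 1 / n)) atTop
      (𝓝 (1 / 2)) := by
    have := hnum.div hden (by norm_num : (2 : ℝ) ≠ 0)
    exact this
  have hg2 : Tendsto (fun n : ℕ => 2 * ((1 - ((k : ℝ) + 1) * (1 / n)) / (2 + 1 / n)) ^ 2)
      atTop (𝓝 (1 / 2)) := by
    have := (hg.pow 2).const_mul 2
    norm_num at this
    convert this using 2
    norm_num
  have hLeq : ∀ᶠ n in atTop, 2 * ((1 - ((k : ℝ) + 1) * (1 / n)) / (2 + 1 / n)) ^ 2 = L n := by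
    filter_upwards [eventually_ge_atTop 1] with n hn
    have hn0 : (n : ℝ) ≠ 0 := by positivity
    have h2n : (2 * (n : ℝ) + 1) ≠ 0 := by positivity
    simp only [hL]
    rw [div_pow, div_pow]
    have hden1 : ((2 : ℝ) + 1 / n) ≠ 0 := by positivity
    field_simp
    ring
  have hLtend : Tendsto L atTop (𝓝 (1 / 2)) := hg2.congr' hLeq
  have h1 : liminf L atTop = 1 / 2 := hLtend.liminf_eq
  have hub : ∀ n, densitySeq V v n ≤ 1 := by
    intro n
    have hVfin : (V n).Finite := by rw [hV]; exact sqGrid_finite _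
    have hle : (burnSet V v n).ncard ≤ (V n).ncard :=
      Set.ncard_le_ncard (burnSet_subset_V V hV v hact n) hVfin
    unfold densitySeq
    apply div_le_one_of_le₀ (Nat.cast_le.mpr hle) (Nat.cast_nonneg _)
  have hbd : IsBoundedUnder (· ≥ ·) atTop L := hLtend.isBoundedUnder_ge
  have hcob : IsCoboundedUnder (· ≥ ·) atTop (densitySeq V v) :=
    (isBoundedUnder_of ⟨1, hub⟩).isCoboundedUnder_ge
  calc (1 : ℝ) / 2 = liminf L atTop := h1.symm
    _ ≤ liminf (densitySeq V v) atTop := liminf_le_liminf hbound hbd hcob
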